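/- arXiv:1312.5533 — 5 statements merged into one kernel-verified Lean document; each statement's English description precedes it below -/
import Mathlib

section
/- Let m, n ≥ 1 and let P : {1,…,m} × {1,…,n+1} → ℝ³ and Q : {1,…,m+1} × {1,…,n} → ℝ³ (writing P_j^{(r)} and Q_i^{(s)}). Suppose a family C : {1,…,m+1} × {1,…,n+1} → ℝ³ satisfies C_{r,j} + C_{r+1,j} = 2 P_j^{(r)} for all 1 ≤ r ≤ m, 1 ≤ j ≤ n+1, and C_{i,s} + C_{i,s+1} = 2 Q_i^{(s)} for all 1 ≤ s ≤ n, 1 ≤ i ≤ m+1. Then for all 1 ≤ i ≤ m+1 and 1 ≤ j ≤ n+1, C_{i,j} = γ_{i,j} + (−1)^{i+j} C_{1,1}, where γ_{i,j} = 2[ Σ_{r=1}^{i−1} (−1)^{r+1} P_j^{(i−r)} + (−1)^i Σ_{s=1}^{j−1} (−1)^s Q_1^{(j−s)} ] (empty sums equal 0). -/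
private lemma icc_to_range (g : ℕ → Fin 3 → ℝ) (k : ℕ) :
    ∑ r ∈ Finset.Icc 1 k, g r = ∑ t ∈ Finset.range k, g (1 + t) := by
  rw [← Finset.Ico_add_one_right_eq_Icc, Finset.sum_Ico_eq_sum_range]
  simp

private lemma shiftP (f : ℕ → Fin 3 → ℝ) (k : ℕ) :
    ∑ r ∈ Finset.Icc 1 (k + 1), ((-1 : ℝ) ^ (r + 1)) • f (k + 2 - r)
      = f (k + 1) - ∑ r ∈ Finset.Icc 1 k, ((-1 : ℝ) ^ (r + 1)) • f (k + 1 - r) := by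
  rw [icc_to_range, icc_to_range]
  have h1 : ∀ t, ((-1 : ℝ) ^ (1 + t + 1)) • f (k + 2 - (1 + t))
      = ((-1 : ℝ) ^ t) • f (k + 1 - t) := by
    intro t
    have hp : (-1 : ℝ) ^ (1 + t + 1) = (-1 : ℝ) ^ t := by
      rw [show 1 + t + 1 = t + 2 by ring, pow_add]; simp
    rw [hp, show k + 2 - (1 + t) = k + 1 - t by omega]
  have h2 : ∀ t, ((-1 : ℝ) ^ (1 + t + 1)) • f (k + 1 - (1 + t))
      = ((-1 : ℝ) ^ t) • f (k - t) := by
    intro t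
    have hp : (-1 : ℝ) ^ (1 + t + 1) = (-1 : ℝ) ^ t := by
      rw [show 1 + t + 1 = t + 2 by ring, pow_add]; simp
    rw [hp, show k + 1 - (1 + t) = k - t by omega]
  simp only [h1, h2]
  rw [Finset.sum_range_succ']
  simp only [pow_zero, one_smul, Nat.sub_zero]
  have h3 : ∀ t ∈ Finset.range k, ((-1 : ℝ) ^ (t + 1)) • f (k + 1 - (t + 1))
      = -(((-1 : ℝ) ^ t) • f (k - t)) := by
    intro t _
    rw [pow_succ, show k + 1 - (t + 1) = k - t by omega]
    simp [neg_smul, mul_comm]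
  rw [Finset.sum_congr rfl h3, Finset.sum_neg_distrib]
  abel

private lemma shiftQ (f : ℕ → Fin 3 → ℝ) (k : ℕ) :
    ∑ s ∈ Finset.Icc 1 (k + 1), ((-1 : ℝ) ^ s) • f (k + 2 - s)
      = -f (k + 1) - ∑ s ∈ Finset.Icc 1 k, ((-1 : ℝ) ^ s) • f (k + 1 - s) := by
  rw [icc_to_range, icc_to_range]
  have h1 : ∀ t, ((-1 : ℝ) ^ (1 + t)) • f (k + 2 - (1 + t))
      = -(((-1 : ℝ) ^ t) • f (k + 1 - t)) := by
    intro t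
    rw [show 1 + t = t + 1 by ring, pow_succ, show k + 2 - (t + 1) = k + 1 - t by omega]
    simp [neg_smul, mul_comm]
  have h2 : ∀ t, ((-1 : ℝ) ^ (1 + t)) • f (k + 1 - (1 + t))
      = -(((-1 : ℝ) ^ t) • f (k - t)) := by
    intro t
    rw [show 1 + t = t + 1 by ring, pow_succ, show k + 1 - (t + 1) = k - t by omega]
    simp [neg_smul, mul_comm]
  simp only [h1, h2]
  rw [Finset.sum_neg_distrib, Finset.sum_neg_distrib, Finset.sum_range_succ']
  simp only [pow_zero, one_smul, Nat.sub_zero]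
  have h3 : ∀ t ∈ Finset.range k, ((-1 : ℝ) ^ (t + 1)) • f (k + 1 - (t + 1))
      = -(((-1 : ℝ) ^ t) • f (k - t)) := by
    intro t _
    rw [pow_succ, show k + 1 - (t + 1) = k - t by omega]
    simp [neg_smul, mul_comm]
  rw [Finset.sum_congr rfl h3, Finset.sum_neg_distrib]
  abel

/-- Lemma 1 of the paper: the control points of a surface interpolating a curve
network are determined by `C 1 1` up to alternating signs.  `P r j` denotes
`P_j^{(r)}` and `Q i s` denotes `Q_i^{(s)}`. -/
theorem stmt0 (m n : ℕ) (hm : 1 ≤ m) (hn : 1 ≤ n)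
    (P Q C : ℕ → ℕ → Fin 3 → ℝ)
    (hP : ∀ r j, 1 ≤ r → r ≤ m → 1 ≤ j → j ≤ n + 1 →
      C r j + C (r + 1) j = (2 : ℝ) • P r j)
    (hQ : ∀ i s, 1 ≤ i → i ≤ m + 1 → 1 ≤ s → s ≤ n →
      C i s + C i (s + 1) = (2 : ℝ) • Q i s) :
    ∀ i j, 1 ≤ i → i ≤ m + 1 → 1 ≤ j → j ≤ n + 1 →
      C i j =
        (2 : ℝ) • ((∑ r ∈ Finset.Icc 1 (i - 1), ((-1 : ℝ) ^ (r + 1)) • P (i - r) j)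
            + ((-1 : ℝ) ^ i) • ∑ s ∈ Finset.Icc 1 (j - 1), ((-1 : ℝ) ^ s) • Q 1 (j - s))
          + ((-1 : ℝ) ^ (i + j)) • C 1 1 := by
  have hempty : Finset.Icc 1 0 = (∅ : Finset ℕ) := by
    apply Finset.Icc_eq_empty; omega
  have key1 : ∀ j, 1 ≤ j → j ≤ n + 1 →
      C 1 j =
        (2 : ℝ) • ((∑ r ∈ Finset.Icc 1 (1 - 1), ((-1 : ℝ) ^ (r + 1)) • P (1 - r) j)
            + ((-1 : ℝ) ^ 1) • ∑ s ∈ Finset.Icc 1 (j - 1), ((-1 : ℝ) ^ s) • Q 1 (j - s))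
          + ((-1 : ℝ) ^ (1 + j)) • C 1 1 := by
    intro j hj1
    induction j, hj1 using Nat.le_induction with
    | base =>
      intro _
      simp
    | succ j hj ih =>
      intro hj2
      have hjn : j ≤ n := by omega
      have ihe := ih (by omega)
      have hq := hQ 1 j le_rfl (by omega) hj hjn
      have hC : C 1 (j + 1) = (2 : ℝ) • Q 1 j - C 1 j := by
        rw [← hq]; abel
      obtain ⟨k, rfl⟩ : ∃ k, j = k + 1 := ⟨j - 1, by omega⟩
      rw [hC, ihe]
      simp only [hempty, Finset.sum_empty, Nat.add_sub_cancel, zero_add,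
        show k + 1 + 1 = k + 2 by ring, show (k : ℕ) + 2 - 1 = k + 1 by omega]
      rw [shiftQ (fun t => Q 1 t) k]
      rw [show (-1 : ℝ) ^ (1 + (k + 2)) = -(-1 : ℝ) ^ (1 + (k + 1)) by
        rw [show 1 + (k + 2) = (1 + (k + 1)) + 1 by ring, pow_succ]; ring]
      module
  intro i j hi1 him hj1 hjn
  induction i, hi1 using Nat.le_induction with
  | base => exact key1 j hj1 hjn
  | succ i hi ih =>
    have hip : i ≤ m := by omega
    have ihe := ih (by omega)
    have hp := hP i j hi hip hj1 hjn
    have hC : C (i + 1) j = (2 : ℝ) • P i j - C i j := by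
      rw [← hp]; abel
    obtain ⟨k, rfl⟩ : ∃ k, i = k + 1 := ⟨i - 1, by omega⟩
    rw [hC, ihe]
    simp only [Nat.add_sub_cancel, show k + 1 + 1 = k + 2 by ring,
      show (k : ℕ) + 2 - 1 = k + 1 by omega]
    rw [shiftP (fun t => P t j) k]
    rw [show (-1 : ℝ) ^ (k + 2) = -(-1 : ℝ) ^ (k + 1) by rw [pow_succ]; ring]
    rw [show (-1 : ℝ) ^ (k + 2 + j) = -(-1 : ℝ) ^ (k + 1 + j) by
      rw [show k + 2 + j = (k + 1 + j) + 1 by ring, pow_succ]; ring]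
    module
end

section
/- Let m, n ≥ 1. Suppose C and C' are two families {1,…,m+1}×{1,…,n+1} → ℝ³ both satisfying C_{r,j} + C_{r+1,j} = 2 P_j^{(r)} (1 ≤ r ≤ m, 1 ≤ j ≤ n+1) and C_{i,s} + C_{i,s+1} = 2 Q_i^{(s)} (1 ≤ s ≤ n, 1 ≤ i ≤ m+1). Then there exists a vector E ∈ ℝ³ such that C'_{i,j} − C_{i,j} = (−1)^{i+j} E for all i, j. -/
/-- Key step of Theorem 2 (uniqueness): two solutions of the interpolation
constraints differ by an alternating-sign multiple of a single vector `E`. -/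
theorem stmt3 (m n : ℕ) (hm : 1 ≤ m) (hn : 1 ≤ n)
    (P Q C C' : ℕ → ℕ → Fin 3 → ℝ)
    (hP : ∀ r j, 1 ≤ r → r ≤ m → 1 ≤ j → j ≤ n + 1 →
      C r j + C (r + 1) j = (2 : ℝ) • P r j)
    (hQ : ∀ i s, 1 ≤ i → i ≤ m + 1 → 1 ≤ s → s ≤ n →
      C i s + C i (s + 1) = (2 : ℝ) • Q i s)
    (hP' : ∀ r j, 1 ≤ r → r ≤ m → 1 ≤ j → j ≤ n + 1 →
      C' r j + C' (r + 1) j = (2 : ℝ) • P r j)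
    (hQ' : ∀ i s, 1 ≤ i → i ≤ m + 1 → 1 ≤ s → s ≤ n →
      C' i s + C' i (s + 1) = (2 : ℝ) • Q i s) :
    ∃ E : Fin 3 → ℝ, ∀ i j, 1 ≤ i → i ≤ m + 1 → 1 ≤ j → j ≤ n + 1 →
      C' i j - C i j = ((-1 : ℝ) ^ (i + j)) • E := by
  set D : ℕ → ℕ → Fin 3 → ℝ := fun i j => C' i j - C i j with hD
  have hrow : ∀ r j, 1 ≤ r → r ≤ m → 1 ≤ j → j ≤ n + 1 →
      D (r + 1) j = -D r j := by
    intro r j h1 h2 h3 h4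
    have := hP r j h1 h2 h3 h4
    have := hP' r j h1 h2 h3 h4
    simp only [hD]
    abel_nf
    linear_combination (norm := abel_nf) hP' r j h1 h2 h3 h4 - hP r j h1 h2 h3 h4
  have hcol : ∀ i s, 1 ≤ i → i ≤ m + 1 → 1 ≤ s → s ≤ n →
      D i (s + 1) = -D i s := by
    intro i s h1 h2 h3 h4
    simp only [hD]
    linear_combination (norm := abel_nf) hQ' i s h1 h2 h3 h4 - hQ i s h1 h2 h3 h4
  have key1 : ∀ j, 1 ≤ j → j ≤ n + 1 → ∀ i, 1 ≤ i → i ≤ m + 1 →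
      D i j = ((-1 : ℝ) ^ (i + 1)) • D 1 j := by
    intro j hj1 hj2 i hi
    induction i, hi using Nat.le_induction with
    | base => intro _; simp
    | succ i hi ih =>
      intro hle
      have him : i ≤ m := Nat.lt_succ_iff.mp hle
      rw [hrow i j hi him hj1 hj2, ih (him.trans (Nat.le_succ m))]
      rw [pow_succ]
      module
  have key2 : ∀ j, 1 ≤ j → j ≤ n + 1 →
      D 1 j = ((-1 : ℝ) ^ (j + 1)) • D 1 1 := by
    intro j hj
    induction j, hj using Nat.le_induction with
    | base => intro _; simp
    | succ j hj ih =>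
      intro hle
      have hjn : j ≤ n := Nat.lt_succ_iff.mp hle
      rw [hcol 1 j le_rfl (by omega) hj hjn, ih (hjn.trans (Nat.le_succ n))]
      rw [pow_succ]
      module
  refine ⟨D 1 1, fun i j h1 h2 h3 h4 => ?_⟩
  have := key1 j h3 h4 i h1 h2
  rw [key2 j h3 h4] at this
  show D i j = _
  rw [this]
  rw [smul_smul, ← pow_add, show i + 1 + (j + 1) = (i + j) + 2 by ring, pow_add]
  norm_num
end

section
/- Let m, n ≥ 1 and let B : {0,…,m+2} × {0,…,n+2} → V be a family of elements of a real vector space V satisfying the single linear dependence relation Σ_{i=1}^{m+1} Σ_{j=1}^{n+1} (−1)^{i+j} B_{i,j} = 0. If C and C' are two coefficient families satisfying the averaging conditions C_{r,j}+C_{r+1,j} = 2P_j^{(r)}, C_{i,s}+C_{i,s+1} = 2Q_i^{(s)} (indices as before) together with boundary conditions C_{i,0}=C'_{i,0}, C_{i,n+2}=C'_{i,n+2}, C_{0,j}=C'_{0,j}, C_{m+2,j}=C'_{m+2,j}, then Σ_{i,j} C_{i,j} ⊗ B_{i,j} = Σ_{i,j} C'_{i,j} ⊗ B_{i,j} as elements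 of ℝ³ ⊗ V (equivalently, Σ_{i,j} (C_{i,j})_k B_{i,j} = Σ_{i,j} (C'_{i,j})_k B_{i,j} in V for each coordinate k). -/
/-- Abstraction of Theorem 2: if the blending functions `B i j` satisfy the single
dependence relation `∑ (-1)^(i+j) B i j = 0` over interior indices, then any two
coefficient families satisfying the averaging conditions (with the same data `P`,
`Q`) and agreeing on the boundary produce the same surface `∑ C i j • B i j`
(componentwise in each coordinate `k`). -/
theorem stmt4 (m n : ℕ) (hm : 1 ≤ m) (hn : 1 ≤ n)
    (V : Type*) [AddCommGroup V] [Module ℝ V]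
    (B : ℕ → ℕ → V)
    (hdep : ∑ i ∈ Finset.Icc 1 (m + 1), ∑ j ∈ Finset.Icc 1 (n + 1),
      ((-1 : ℝ) ^ (i + j)) • B i j = 0)
    (P Q C C' : ℕ → ℕ → Fin 3 → ℝ)
    (hP : ∀ r j, 1 ≤ r → r ≤ m → 1 ≤ j → j ≤ n + 1 →
      C r j + C (r + 1) j = (2 : ℝ) • P r j)
    (hQ : ∀ i s, 1 ≤ i → i ≤ m + 1 → 1 ≤ s → s ≤ n →
      C i s + C i (s + 1) = (2 : ℝ) • Q i s)
    (hP' : ∀ r j, 1 ≤ r → r ≤ m → 1 ≤ j → j ≤ n + 1 →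
      C' r j + C' (r + 1) j = (2 : ℝ) • P r j)
    (hQ' : ∀ i s, 1 ≤ i → i ≤ m + 1 → 1 ≤ s → s ≤ n →
      C' i s + C' i (s + 1) = (2 : ℝ) • Q i s)
    (hb1 : ∀ i, i ≤ m + 2 → C i 0 = C' i 0)
    (hb2 : ∀ i, i ≤ m + 2 → C i (n + 2) = C' i (n + 2))
    (hb3 : ∀ j, j ≤ n + 2 → C 0 j = C' 0 j)
    (hb4 : ∀ j, j ≤ n + 2 → C (m + 2) j = C' (m + 2) j) :
    ∀ k : Fin 3,
      ∑ i ∈ Finset.Icc 0 (m + 2), ∑ j ∈ Finset.Icc 0 (n + 2), (C i j k) • B i j =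
      ∑ i ∈ Finset.Icc 0 (m + 2), ∑ j ∈ Finset.Icc 0 (n + 2), (C' i j k) • B i j := by
  intro k
  set D : ℕ → ℕ → ℝ := fun i j => C i j k - C' i j k with hDdef
  -- vertical neighbor sign flip
  have hrow : ∀ r j, 1 ≤ r → r ≤ m → 1 ≤ j → j ≤ n + 1 → D (r + 1) j = - D r j := by
    intro r j h1 h2 h3 h4
    have h := congrFun ((hP r j h1 h2 h3 h4).trans (hP' r j h1 h2 h3 h4).symm) k
    simp only [Pi.add_apply] at h
    simp only [hDdef]; linarith
  have hcol : ∀ i s, 1 ≤ i → i ≤ m + 1 → 1 ≤ s → s ≤ n → D i (s + 1) = - D i s := by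
    intro i s h1 h2 h3 h4
    have h := congrFun ((hQ i s h1 h2 h3 h4).trans (hQ' i s h1 h2 h3 h4).symm) k
    simp only [Pi.add_apply] at h
    simp only [hDdef]; linarith
  have hcolpow : ∀ i j, 1 ≤ i → i ≤ m + 1 → 1 ≤ j → j ≤ n + 1 →
      D i j = (-1 : ℝ) ^ (j + 1) * D i 1 := by
    intro i j hi1 hi2 hj1
    induction j, hj1 using Nat.le_induction with
    | base => intro _; simp [pow_succ]
    | succ s hs ih =>
      intro hsucc
      have hsn : s ≤ n := by omega
      rw [hcol i s hi1 hi2 hs hsn, ih (by omega), pow_succ]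
      ring
  have hrowpow : ∀ i, 1 ≤ i → i ≤ m + 1 → D i 1 = (-1 : ℝ) ^ (i + 1) * D 1 1 := by
    intro i hi1
    induction i, hi1 using Nat.le_induction with
    | base => intro _; simp [pow_succ]
    | succ r hr ih =>
      intro hsucc
      have hrm : r ≤ m := by omega
      rw [hrow r 1 hr hrm le_rfl (by omega), ih (by omega)]
      rw [pow_succ]
      ring
  have key : ∀ i j, 1 ≤ i → i ≤ m + 1 → 1 ≤ j → j ≤ n + 1 →
      D i j = (-1 : ℝ) ^ (i + j) * D 1 1 := by
    intro i j hi1 hi2 hj1 hj2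
    rw [hcolpow i j hi1 hi2 hj1 hj2, hrowpow i hi1 hi2, ← mul_assoc, ← pow_add]
    congr 1
    rw [show j + 1 + (i + 1) = i + j + 2 by ring, pow_add]
    norm_num
  -- reduce goal to sum of differences
  rw [← sub_eq_zero, ← Finset.sum_sub_distrib]
  simp only [← Finset.sum_sub_distrib, ← sub_smul]
  have hsub : (Finset.Icc 1 (m + 1)) ×ˢ (Finset.Icc 1 (n + 1)) ⊆
      (Finset.Icc 0 (m + 2)) ×ˢ (Finset.Icc 0 (n + 2)) := by
    apply Finset.product_subset_product <;> intro x hx <;>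
      simp only [Finset.mem_Icc] at * <;> omega
  calc ∑ i ∈ Finset.Icc 0 (m + 2), ∑ j ∈ Finset.Icc 0 (n + 2), (C i j k - C' i j k) • B i j
      = ∑ p ∈ (Finset.Icc 0 (m + 2)) ×ˢ (Finset.Icc 0 (n + 2)), D p.1 p.2 • B p.1 p.2 := by
        rw [Finset.sum_product]
    _ = ∑ p ∈ (Finset.Icc 1 (m + 1)) ×ˢ (Finset.Icc 1 (n + 1)), D p.1 p.2 • B p.1 p.2 := by
        refine (Finset.sum_subset hsub ?_).symm
        rintro ⟨i, j⟩ hmem hnot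
        simp only [Finset.mem_product, Finset.mem_Icc] at hmem hnot
        have hz : D i j = 0 := by
          simp only [hDdef, sub_eq_zero]
          rcases Nat.eq_zero_or_pos i with hi | hi
          · subst hi; exact congrFun (hb3 j hmem.2.2) k
          rcases Nat.eq_zero_or_pos j with hj | hj
          · subst hj; exact congrFun (hb1 i hmem.1.2) k
          have : i = m + 2 ∨ j = n + 2 := by omega
          rcases this with h | h
          · subst h; exact congrFun (hb4 j hmem.2.2) k
          · subst h; exact congrFun (hb2 i hmem.1.2) k
        simp [hz]
    _ = D 1 1 • ∑ p ∈ (Finset.Icc 1 (m + 1)) ×ˢ (Finset.Icc 1 (n + 1)),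
          ((-1 : ℝ) ^ (p.1 + p.2)) • B p.1 p.2 := by
        rw [Finset.smul_sum]
        refine Finset.sum_congr rfl ?_
        rintro ⟨i, j⟩ hmem
        simp only [Finset.mem_product, Finset.mem_Icc] at hmem
        rw [key i j hmem.1.1 hmem.1.2 hmem.2.1 hmem.2.2, mul_comm, mul_smul]
    _ = 0 := by
        have h0 : ∑ p ∈ (Finset.Icc 1 (m + 1)) ×ˢ (Finset.Icc 1 (n + 1)),
            ((-1 : ℝ) ^ (p.1 + p.2)) • B p.1 p.2 = 0 := by
          rw [Finset.sum_product]; exact hdep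
        rw [h0, smul_zero]
end

section
/- Consider the perturbed recursion: given ε-perturbed data, define Ē_{1,1} = e_{1,1}, Ē_{1,j} = 2ε_{1,j−1} − Ē_{1,j−1} for j ≥ 2, and Ē_{i,j} = 2δ_{i−1,j} − Ē_{i−1,j} for i ≥ 2, where ε and δ are the perturbations of Q and P respectively (Ē is the error C̄_{i,j} − C_{i,j}). Then for all i, j, ‖Ē_{i,j}‖ ≤ ‖e_{1,1}‖ + 2 Σ_{s=1}^{j−1} ‖ε_{1,s}‖ + 2 Σ_{r=1}^{i−1} ‖δ_{r,j}‖; in particular, if all perturbations are bounded by ε₀ in norm, then ‖Ē_{i,j}‖ ≤ (1 + 2(i−1) + 2(j−1)) ε₀, i.e. the error grows at most linearly in i + j. -/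
/-- Remark 2 of the paper: stability of the control-point generation algorithm.
`Ebar i j` is the error `C̄ i j − C i j`; it obeys the same two-term recursion
driven by the data perturbations `ε` (on `Q`) and `δ` (on `P`), and it grows at
most linearly in `i + j`. -/
theorem stmt6 (Ebar ε δ : ℕ → ℕ → EuclideanSpace ℝ (Fin 3))
    (hrow : ∀ j, 2 ≤ j → Ebar 1 j = (2 : ℝ) • ε 1 (j - 1) - Ebar 1 (j - 1))
    (hcol : ∀ i j, 2 ≤ i → 1 ≤ j → Ebar i j = (2 : ℝ) • δ (i - 1) j - Ebar (i - 1) j) :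
    (∀ i j, 1 ≤ i → 1 ≤ j →
      ‖Ebar i j‖ ≤ ‖Ebar 1 1‖ + 2 * ∑ s ∈ Finset.Icc 1 (j - 1), ‖ε 1 s‖
        + 2 * ∑ r ∈ Finset.Icc 1 (i - 1), ‖δ r j‖) ∧
    (∀ ε₀ : ℝ, ‖Ebar 1 1‖ ≤ ε₀ → (∀ i j, ‖ε i j‖ ≤ ε₀) → (∀ i j, ‖δ i j‖ ≤ ε₀) →
      ∀ i j, 1 ≤ i → 1 ≤ j →
        ‖Ebar i j‖ ≤ (1 + 2 * ((i : ℝ) - 1) + 2 * ((j : ℝ) - 1)) * ε₀) := by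
  have hrowB : ∀ j, 1 ≤ j →
      ‖Ebar 1 j‖ ≤ ‖Ebar 1 1‖ + 2 * ∑ s ∈ Finset.Icc 1 (j - 1), ‖ε 1 s‖ := by
    intro j hj
    induction j with
    | zero => omega
    | succ n ih =>
      rcases Nat.lt_or_ge n 1 with h | hn
      · interval_cases n
        simp
      · rw [hrow (n + 1) (by omega)]
        simp only [Nat.add_sub_cancel]
        obtain ⟨m, rfl⟩ : ∃ m, n = m + 1 := ⟨n - 1, by omega⟩
        have hsum : ∑ s ∈ Finset.Icc 1 (m + 1), ‖ε 1 s‖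
            = ∑ s ∈ Finset.Icc 1 m, ‖ε 1 s‖ + ‖ε 1 (m + 1)‖ :=
          Finset.sum_Icc_succ_top (by omega) _
        have h1 := ih hn
        simp only [Nat.add_sub_cancel] at h1
        calc ‖(2 : ℝ) • ε 1 (m + 1) - Ebar 1 (m + 1)‖
            ≤ ‖(2 : ℝ) • ε 1 (m + 1)‖ + ‖Ebar 1 (m + 1)‖ := norm_sub_le _ _
          _ ≤ 2 * ‖ε 1 (m + 1)‖ + (‖Ebar 1 1‖ + 2 * ∑ s ∈ Finset.Icc 1 m, ‖ε 1 s‖) := by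
              rw [norm_smul]; simp; linarith
          _ = ‖Ebar 1 1‖ + 2 * ∑ s ∈ Finset.Icc 1 (m + 1), ‖ε 1 s‖ := by
              rw [hsum]; ring
  have main : ∀ i j, 1 ≤ i → 1 ≤ j →
      ‖Ebar i j‖ ≤ ‖Ebar 1 1‖ + 2 * ∑ s ∈ Finset.Icc 1 (j - 1), ‖ε 1 s‖
        + 2 * ∑ r ∈ Finset.Icc 1 (i - 1), ‖δ r j‖ := by
    intro i j hi hj
    induction i with
    | zero => omega
    | succ n ih =>
      rcases Nat.lt_or_ge n 1 with h | hn
      · interval_cases n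
        simpa using hrowB j hj
      · rw [hcol (n + 1) j (by omega) hj]
        simp only [Nat.add_sub_cancel]
        obtain ⟨m, rfl⟩ : ∃ m, n = m + 1 := ⟨n - 1, by omega⟩
        have hsum : ∑ r ∈ Finset.Icc 1 (m + 1), ‖δ r j‖
            = ∑ r ∈ Finset.Icc 1 m, ‖δ r j‖ + ‖δ (m + 1) j‖ :=
          Finset.sum_Icc_succ_top (by omega) _
        have h1 := ih hn
        simp only [Nat.add_sub_cancel] at h1
        calc ‖(2 : ℝ) • δ (m + 1) j - Ebar (m + 1) j‖
            ≤ ‖(2 : ℝ) • δ (m + 1) j‖ + ‖Ebar (m + 1) j‖ := norm_sub_le _ _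
          _ ≤ 2 * ‖δ (m + 1) j‖ + (‖Ebar 1 1‖ + 2 * ∑ s ∈ Finset.Icc 1 (j - 1), ‖ε 1 s‖
              + 2 * ∑ r ∈ Finset.Icc 1 m, ‖δ r j‖) := by
              rw [norm_smul]; simp; linarith
          _ = ‖Ebar 1 1‖ + 2 * ∑ s ∈ Finset.Icc 1 (j - 1), ‖ε 1 s‖
              + 2 * ∑ r ∈ Finset.Icc 1 (m + 1), ‖δ r j‖ := by rw [hsum]; ring
  refine ⟨main, ?_⟩
  intro ε₀ hE hε hδ i j hi hj
  have h0 : (0 : ℝ) ≤ ε₀ := le_trans (norm_nonneg _) hE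
  have hεs : ∑ s ∈ Finset.Icc 1 (j - 1), ‖ε 1 s‖ ≤ ((j : ℝ) - 1) * ε₀ := by
    calc ∑ s ∈ Finset.Icc 1 (j - 1), ‖ε 1 s‖
        ≤ ∑ s ∈ Finset.Icc 1 (j - 1), ε₀ := Finset.sum_le_sum fun s _ => hε 1 s
      _ = ((j - 1 : ℕ) : ℝ) * ε₀ := by simp [mul_comm]
      _ = ((j : ℝ) - 1) * ε₀ := by rw [Nat.cast_sub hj]; norm_num
  have hδs : ∑ r ∈ Finset.Icc 1 (i - 1), ‖δ r j‖ ≤ ((i : ℝ) - 1) * ε₀ := by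
    calc ∑ r ∈ Finset.Icc 1 (i - 1), ‖δ r j‖
        ≤ ∑ r ∈ Finset.Icc 1 (i - 1), ε₀ := Finset.sum_le_sum fun r _ => hδ r j
      _ = ((i - 1 : ℕ) : ℝ) * ε₀ := by simp [mul_comm]
      _ = ((i : ℝ) - 1) * ε₀ := by rw [Nat.cast_sub hi]; norm_num
  have := main i j hi hj
  nlinarith [this, hεs, hδs]
end

section
/- Let S(u,v) = Σ_{i,j} C_{i,j} B_i(u) B_j(v) be a tensor-product quadratic spline as above. The curves φ_r(v) = Σ_j P_j^{(r)} B_j(v) (r = 0,…,m+1) satisfy S(u_r, v) = φ_r(v) for all v if and only if: C_{0,j} = P_j^{(0)} and C_{m+2,j} = P_j^{(m+1)} for all j, and C_{r,j} + C_{r+1,j} = 2 P_j^{(r)} for 1 ≤ r ≤ m and all 0 ≤ j ≤ n+2. -/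
/-- Cox–de Boor recursion for B-splines on the knot sequence `u`.  Degree-0
splines are the characteristic functions of the half-open knot intervals
`[u i, u (i+1))`, except that the interval reaching the right endpoint `b` of the
parameter domain is taken closed at `b` (the usual clamped-evaluation
convention).  Terms whose denominator vanishes (repeated knots) are `0`, which is
automatic since division by zero is `0` in Lean. -/
noncomputable def coxDeBoor (u : ℤ → ℝ) (b : ℝ) : ℕ → ℤ → ℝ → ℝ
  | 0, i, x =>
      if u i ≤ x ∧ (x < u (i + 1) ∨ (x = b ∧ u (i + 1) = b ∧ u i ≠ b)) then 1 else 0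
  | k + 1, i, x =>
      (x - u i) / (u (i + (k : ℤ) + 1) - u i) * coxDeBoor u b k i x
        + (u (i + (k : ℤ) + 2) - x) / (u (i + (k : ℤ) + 2) - u (i + 1))
            * coxDeBoor u b k (i + 1) x

/-- The clamped uniform knot vector of the paper:
`u₋₂ = u₋₁ = u₀ = a`, `uᵢ = a + i h` for `1 ≤ i ≤ m` with `h = (b-a)/(m+1)`,
and `u_{m+1} = u_{m+2} = u_{m+3} = b`. -/
noncomputable def clampedKnots (a b : ℝ) (m : ℕ) : ℤ → ℝ := fun i =>
  if i ≤ 0 then a else if i ≤ (m : ℤ) then a + (i : ℝ) * ((b - a) / ((m : ℝ) + 1)) else b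

/-- The quadratic B-spline `B i` of the paper, with support `[u (i-2), u (i+1)]`,
on the clamped uniform knot vector on `[a, b]` with `m` interior knots. -/
noncomputable def Bspl (a b : ℝ) (m : ℕ) (i : ℤ) (x : ℝ) : ℝ :=
  coxDeBoor (clampedKnots a b m) b 2 (i - 2) x


lemma clampedKnots_eq (a b : ℝ) (m : ℕ) (i : ℤ) :
    clampedKnots a b m i
      = a + ((max 0 (min i ((m : ℤ) + 1)) : ℤ) : ℝ) * ((b - a) / ((m : ℝ) + 1)) := by
  have hm : ((m : ℝ) + 1) ≠ 0 := by positivity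
  unfold clampedKnots
  split_ifs with h1 h2
  · have h : max 0 (min i ((m : ℤ) + 1)) = 0 := by omega
    rw [h]; simp
  · have h : max 0 (min i ((m : ℤ) + 1)) = i := by omega
    rw [h]
  · have h : max 0 (min i ((m : ℤ) + 1)) = (m : ℤ) + 1 := by omega
    rw [h]; push_cast; field_simp; ring

lemma hstep_pos {a b : ℝ} (hab : a < b) (m : ℕ) : 0 < (b - a) / ((m : ℝ) + 1) := by
  apply div_pos (by linarith) (by positivity)

lemma b_eq {a b : ℝ} (m : ℕ) (hab : a < b) :
    a + ((m : ℝ) + 1) * ((b - a) / ((m : ℝ) + 1)) = b := by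
  have hm : ((m : ℝ) + 1) ≠ 0 := by positivity
  field_simp
  ring

lemma knot_le_iff {a b : ℝ} (hab : a < b) (m : ℕ) (l : ℤ) (t : ℤ) :
    clampedKnots a b m l ≤ a + (t : ℝ) * ((b - a) / ((m : ℝ) + 1))
      ↔ max 0 (min l ((m : ℤ) + 1)) ≤ t := by
  rw [clampedKnots_eq]
  have hp := hstep_pos hab m
  constructor
  · intro h
    by_contra hc
    push_neg at hc
    have : (t : ℝ) < (max 0 (min l ((m : ℤ) + 1)) : ℤ) := by exact_mod_cast hc
    nlinarith
  · intro h
    have : ((max 0 (min l ((m : ℤ) + 1)) : ℤ) : ℝ) ≤ t := by exact_mod_cast h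
    nlinarith

lemma lt_knot_iff {a b : ℝ} (hab : a < b) (m : ℕ) (l : ℤ) (t : ℤ) :
    a + (t : ℝ) * ((b - a) / ((m : ℝ) + 1)) < clampedKnots a b m l
      ↔ t < max 0 (min l ((m : ℤ) + 1)) := by
  rw [← not_le, ← not_le, knot_le_iff hab]

lemma knot_eq_b_iff {a b : ℝ} (hab : a < b) (m : ℕ) (l : ℤ) :
    clampedKnots a b m l = b ↔ (m : ℤ) + 1 ≤ l := by
  have hp := hstep_pos hab m
  rw [clampedKnots_eq]
  set cz := max 0 (min l ((m : ℤ) + 1)) with hcz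
  have hcle : cz ≤ (m : ℤ) + 1 := by omega
  constructor
  · intro h
    by_contra hc
    have h2 : cz ≤ (m : ℤ) := by omega
    have h3 : (cz : ℝ) ≤ (m : ℝ) := by exact_mod_cast h2
    have hb := b_eq m hab
    nlinarith
  · intro h
    have h2 : cz = (m : ℤ) + 1 := by omega
    rw [h2]
    push_cast
    exact b_eq m hab

lemma knot_le_b {a b : ℝ} (hab : a < b) (m : ℕ) (l : ℤ) :
    clampedKnots a b m l ≤ b := by
  rw [clampedKnots_eq]
  have hp := hstep_pos hab m
  have hcle : ((max 0 (min l ((m : ℤ) + 1)) : ℤ) : ℝ) ≤ (m : ℝ) + 1 := by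
    have : max 0 (min l ((m : ℤ) + 1)) ≤ (m : ℤ) + 1 := by omega
    exact_mod_cast this
  have hb := b_eq m hab
  nlinarith

lemma cdB1_expand (u : ℤ → ℝ) (b x : ℝ) (j : ℤ) :
    coxDeBoor u b 1 j x =
      (x - u j) / (u (j + 1) - u j) * coxDeBoor u b 0 j x
        + (u (j + 2) - x) / (u (j + 2) - u (j + 1)) * coxDeBoor u b 0 (j + 1) x := by
  conv_lhs => rw [show (1 : ℕ) = 0 + 1 from rfl, coxDeBoor]
  simp only [Nat.cast_zero, add_zero, Nat.cast_ofNat]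

lemma cdB2_expand (u : ℤ → ℝ) (b x : ℝ) (j : ℤ) :
    coxDeBoor u b 2 j x =
      (x - u j) / (u (j + 2) - u j) *
          ((x - u j) / (u (j + 1) - u j) * coxDeBoor u b 0 j x
            + (u (j + 2) - x) / (u (j + 2) - u (j + 1)) * coxDeBoor u b 0 (j + 1) x)
        + (u (j + 3) - x) / (u (j + 3) - u (j + 1)) *
            ((x - u (j + 1)) / (u (j + 2) - u (j + 1)) * coxDeBoor u b 0 (j + 1) x
              + (u (j + 3) - x) / (u (j + 3) - u (j + 2)) * coxDeBoor u b 0 (j + 2) x) := by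
  conv_lhs => rw [show (2 : ℕ) = 1 + 1 from rfl, coxDeBoor]
  rw [cdB1_expand, cdB1_expand]
  have e1 : j + ((1 : ℕ) : ℤ) + 1 = j + 2 := by push_cast; ring
  have e2 : j + ((1 : ℕ) : ℤ) + 2 = j + 3 := by push_cast; ring
  have e3 : j + 1 + 1 = j + 2 := by ring
  have e4 : j + 1 + 2 = j + 3 := by ring
  rw [e1, e2, e3, e4]

lemma cdB0_at (a b : ℝ) (hab : a < b) (m : ℕ) (l t : ℤ) (ht : 0 ≤ t) (htm : t < (m : ℤ) + 1) :
    coxDeBoor (clampedKnots a b m) b 0 l (a + (t : ℝ) * ((b - a) / ((m : ℝ) + 1)))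
      = if l ≤ t ∧ t < l + 1 then 1 else 0 := by
  have hp := hstep_pos hab m
  have hxb : a + (t : ℝ) * ((b - a) / ((m : ℝ) + 1)) < b := by
    have h3 : (t : ℝ) < (m : ℝ) + 1 := by exact_mod_cast htm
    have hb := b_eq m hab
    nlinarith
  rw [coxDeBoor]
  have hne : ¬ (a + (t : ℝ) * ((b - a) / ((m : ℝ) + 1)) = b) := ne_of_lt hxb
  simp only [knot_le_iff hab, lt_knot_iff hab, hne, false_and, and_false, or_false,
    show (max 0 (min l ((m : ℤ) + 1)) ≤ t ∧ t < max 0 (min (l + 1) ((m : ℤ) + 1)))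
        ↔ (l ≤ t ∧ t < l + 1) from by omega]

lemma cdB0_at_b (a b : ℝ) (hab : a < b) (m : ℕ) (l : ℤ) :
    coxDeBoor (clampedKnots a b m) b 0 l b = if l = (m : ℤ) then 1 else 0 := by
  rw [coxDeBoor]
  have h1 : clampedKnots a b m l ≤ b := knot_le_b hab m l
  have h2 : ¬ (b < clampedKnots a b m (l + 1)) := not_lt.2 (knot_le_b hab m _)
  simp only [h1, true_and, h2, false_or, eq_self_iff_true, true_and, ne_eq,
    knot_eq_b_iff hab,
    show ((m : ℤ) + 1 ≤ l + 1 ∧ ¬ ((m : ℤ) + 1 ≤ l)) ↔ l = (m : ℤ) from by omega]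

lemma knot_val (a b : ℝ) (m : ℕ) (t : ℤ) (h0 : 0 ≤ t) (h1 : t ≤ (m : ℤ) + 1) :
    clampedKnots a b m t = a + (t : ℝ) * ((b - a) / ((m : ℝ) + 1)) := by
  rw [clampedKnots_eq]
  have h : max 0 (min t ((m : ℤ) + 1)) = t := by omega
  rw [h]

lemma knot_nonpos (a b : ℝ) (m : ℕ) (t : ℤ) (h0 : t ≤ 0) :
    clampedKnots a b m t = a := by
  simp [clampedKnots, h0]

lemma Bspl_at_left (a b : ℝ) (hab : a < b) (m : ℕ) (i : ℤ) :
    Bspl a b m i a = if i = 0 then 1 else 0 := by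
  have hp := hstep_pos hab m
  set h := (b - a) / ((m : ℝ) + 1) with hh
  have hN : ∀ l : ℤ, coxDeBoor (clampedKnots a b m) b 0 l a = if l = 0 then 1 else 0 := by
    intro l
    have h2 := cdB0_at a b hab m l 0 le_rfl (by omega)
    simp only [show (l ≤ (0:ℤ) ∧ (0:ℤ) < l + 1) ↔ l = 0 from by omega] at h2
    simpa using h2
  rw [Bspl, cdB2_expand, hN, hN, hN]
  by_cases h0 : i = 0
  · subst h0
    norm_num
    have k1 : clampedKnots a b m (-1) = a := knot_nonpos _ _ _ _ (by omega)
    have k2 : clampedKnots a b m 0 = a := knot_nonpos _ _ _ _ (by omega)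
    have k3 : clampedKnots a b m 1 = a + 1 * h := by
      rw [knot_val a b m 1 (by omega) (by omega)]; norm_num; exact hh.symm
    rw [k1, k2, k3]
    have : h ≠ 0 := ne_of_gt hp
    field_simp
    rw [show a + h - a = h by ring, div_self this]
  · by_cases h1 : i = 1
    · subst h1
      norm_num
      have k0 : clampedKnots a b m (-1) = a := knot_nonpos _ _ _ _ (by omega)
      have k1 : clampedKnots a b m 0 = a := knot_nonpos _ _ _ _ (by omega)
      rw [k0, k1]
      ring
    · by_cases h2 : i = 2
      · subst h2
        norm_num
        have k0 : clampedKnots a b m 0 = a := knot_nonpos _ _ _ _ (by omega)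
        left; left
        rw [k0]; ring
      · have c1 : ¬ (i - 2 = 0) := by omega
        have c2 : ¬ (i - 2 + 1 = 0) := by omega
        have c3 : ¬ (i - 2 + 2 = 0) := by omega
        simp [c1, c2, c3, h0]

lemma Bspl_at_interior (a b : ℝ) (hab : a < b) (m : ℕ) (r : ℕ) (hr1 : 1 ≤ r) (hr2 : r ≤ m)
    (i : ℤ) :
    Bspl a b m i (clampedKnots a b m (r : ℤ))
      = if i = (r : ℤ) ∨ i = (r : ℤ) + 1 then 1 / 2 else 0 := by
  have hp := hstep_pos hab m
  set h := (b - a) / ((m : ℝ) + 1) with hh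
  have hx : clampedKnots a b m (r : ℤ) = a + ((r : ℤ) : ℝ) * h :=
    knot_val a b m r (by omega) (by omega)
  rw [hx]
  have hN : ∀ l : ℤ, coxDeBoor (clampedKnots a b m) b 0 l (a + ((r : ℤ) : ℝ) * h)
      = if l = (r : ℤ) then 1 else 0 := by
    intro l
    have h2 := cdB0_at a b hab m l r (by omega) (by omega)
    simp only [show (l ≤ (r : ℤ) ∧ (r : ℤ) < l + 1) ↔ l = (r : ℤ) from by omega] at h2
    exact h2
  rw [Bspl, cdB2_expand, hN, hN, hN]
  have krm : clampedKnots a b m ((r : ℤ) - 1) = a + (((r : ℤ) : ℝ) - 1) * h := by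
    rw [knot_val a b m _ (by omega) (by omega)]; push_cast; ring
  have kr : clampedKnots a b m (r : ℤ) = a + ((r : ℤ) : ℝ) * h := hx
  have krp : clampedKnots a b m ((r : ℤ) + 1) = a + (((r : ℤ) : ℝ) + 1) * h := by
    rw [knot_val a b m _ (by omega) (by omega)]; push_cast; ring
  have hne : h ≠ 0 := ne_of_gt hp
  by_cases h0 : i = (r : ℤ)
  · subst h0
    rw [if_neg (by omega), if_neg (by omega), if_pos (by omega), if_pos (by omega)]
    simp only [mul_zero, mul_one, add_zero, zero_add,
      show ((r : ℤ) - 2 + 1 : ℤ) = (r : ℤ) - 1 from by ring,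
      show ((r : ℤ) - 2 + 2 : ℤ) = (r : ℤ) from by ring,
      show ((r : ℤ) - 2 + 3 : ℤ) = (r : ℤ) + 1 from by ring,
      show ((r : ℤ) - 1 + 1 : ℤ) = (r : ℤ) from by ring,
      show ((r : ℤ) - 1 + 2 : ℤ) = (r : ℤ) + 1 from by ring,
      krm, kr, krp]
    rw [show a + (((r : ℤ) : ℝ) + 1) * h - (a + ((r : ℤ) : ℝ) * h) = h from by ring,
        show a + (((r : ℤ) : ℝ) + 1) * h - (a + (((r : ℤ) : ℝ) - 1) * h) = 2 * h from by ring]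
    field_simp
  · by_cases h1 : i = (r : ℤ) + 1
    · subst h1
      rw [if_neg (by omega), if_pos (by omega), if_neg (by omega), if_pos (by omega)]
      simp only [mul_zero, mul_one, add_zero, zero_add,
        show ((r : ℤ) + 1 - 2 : ℤ) = (r : ℤ) - 1 from by ring,
        show ((r : ℤ) - 1 + 1 : ℤ) = (r : ℤ) from by ring,
        show ((r : ℤ) - 1 + 2 : ℤ) = (r : ℤ) + 1 from by ring,
        show ((r : ℤ) - 1 + 3 : ℤ) = (r : ℤ) + 2 from by ring,
        krm, kr, krp]
      rw [show a + ((r : ℤ) : ℝ) * h - (a + ((r : ℤ) : ℝ) * h) = 0 from by ring]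
      rw [show a + (((r : ℤ) : ℝ) + 1) * h - (a + (((r : ℤ) : ℝ) - 1) * h) = 2 * h from by ring,
          show a + (((r : ℤ) : ℝ) + 1) * h - (a + ((r : ℤ) : ℝ) * h) = h from by ring,
          show a + ((r : ℤ) : ℝ) * h - (a + (((r : ℤ) : ℝ) - 1) * h) = h from by ring]
      rw [zero_div, mul_zero, add_zero]
      field_simp
    · by_cases h2 : i = (r : ℤ) + 2
      · subst h2
        rw [if_pos (by omega), if_neg (by omega), if_neg (by omega), if_neg (by omega)]
        simp only [mul_zero, mul_one, add_zero, zero_add,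
          show ((r : ℤ) + 2 - 2 : ℤ) = (r : ℤ) from by ring, kr]
        rw [show a + ((r : ℤ) : ℝ) * h - (a + ((r : ℤ) : ℝ) * h) = 0 from by ring]
        ring
      · rw [if_neg (by omega), if_neg (by omega), if_neg (by omega), if_neg (by omega)]
        simp only [mul_zero, add_zero, zero_add]

lemma Bspl_at_right (a b : ℝ) (hab : a < b) (m : ℕ) (i : ℤ) :
    Bspl a b m i b = if i = (m : ℤ) + 2 then 1 else 0 := by
  have hp := hstep_pos hab m
  set h := (b - a) / ((m : ℝ) + 1) with hh
  have hne : h ≠ 0 := ne_of_gt hp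
  have hN := cdB0_at_b a b hab m
  rw [Bspl, cdB2_expand, hN, hN, hN]
  have km : clampedKnots a b m (m : ℤ) = a + ((m : ℤ) : ℝ) * h :=
    knot_val a b m m (by omega) (by omega)
  have kb1 : clampedKnots a b m ((m : ℤ) + 1) = b := (knot_eq_b_iff hab m _).2 (by omega)
  have kb2 : clampedKnots a b m ((m : ℤ) + 2) = b := (knot_eq_b_iff hab m _).2 (by omega)
  have hbv : b = a + (((m : ℤ) : ℝ) + 1) * h := by
    have := b_eq m hab; push_cast at this ⊢; linarith
  by_cases h0 : i = (m : ℤ) + 2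
  · subst h0
    rw [if_pos (by omega), if_neg (by omega), if_neg (by omega), if_pos (by omega)]
    simp only [mul_zero, mul_one, add_zero, zero_add,
      show ((m : ℤ) + 2 - 2 : ℤ) = (m : ℤ) from by ring,
      show ((m : ℤ) + 1 : ℤ) = (m : ℤ) + 1 from by ring,
      show ((m : ℤ) + 2 : ℤ) = (m : ℤ) + 2 from by ring,
      km, kb1, kb2]
    rw [show b - (a + ((m : ℤ) : ℝ) * h) = h from by rw [hbv]; ring]
    field_simp
  · by_cases h1 : i = (m : ℤ) + 1
    · subst h1
      rw [if_neg (by omega), if_pos (by omega), if_neg (by omega), if_neg (by omega)]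
      simp only [mul_zero, mul_one, add_zero, zero_add,
        show ((m : ℤ) + 1 - 2 : ℤ) = (m : ℤ) - 1 from by ring,
        show ((m : ℤ) - 1 + 1 : ℤ) = (m : ℤ) from by ring,
        show ((m : ℤ) - 1 + 2 : ℤ) = (m : ℤ) + 1 from by ring,
        show ((m : ℤ) - 1 + 3 : ℤ) = (m : ℤ) + 2 from by ring,
        kb1, kb2]
      rw [show b - b = (0 : ℝ) from by ring]
      ring
    · by_cases h2 : i = (m : ℤ)
      · subst h2
        rw [if_neg (by omega), if_neg (by omega), if_pos (by omega), if_neg (by omega)]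
        simp only [mul_zero, mul_one, add_zero, zero_add,
          show ((m : ℤ) - 2 + 3 : ℤ) = (m : ℤ) + 1 from by ring, kb1]
        rw [show b - b = (0 : ℝ) from by ring]
        ring
      · rw [if_neg (by omega), if_neg (by omega), if_neg (by omega), if_neg (by omega)]
        simp only [mul_zero, add_zero, zero_add]

/-- real-parameter comparison -/
lemma knot_le_iff' {a b : ℝ} (hab : a < b) (m : ℕ) (l : ℤ) (t : ℝ) :
    clampedKnots a b m l ≤ a + t * ((b - a) / ((m : ℝ) + 1))
      ↔ ((max 0 (min l ((m : ℤ) + 1)) : ℤ) : ℝ) ≤ t := by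
  rw [clampedKnots_eq]
  have hp := hstep_pos hab m
  constructor
  · intro hle
    by_contra hc
    push_neg at hc
    nlinarith
  · intro hle
    nlinarith

lemma cdB0_at_half (a b : ℝ) (hab : a < b) (m : ℕ) (l : ℤ) :
    coxDeBoor (clampedKnots a b m) b 0 l (a + (1 / 2 : ℝ) * ((b - a) / ((m : ℝ) + 1)))
      = if l = 0 then 1 else 0 := by
  have hp := hstep_pos hab m
  set h := (b - a) / ((m : ℝ) + 1) with hh
  have hxb : a + (1 / 2 : ℝ) * h < b := by
    have hb := b_eq m hab
    have : (1 / 2 : ℝ) < (m : ℝ) + 1 := by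
      have : (0 : ℝ) ≤ (m : ℝ) := Nat.cast_nonneg m
      linarith
    nlinarith
  rw [coxDeBoor]
  have hne : ¬ (a + (1 / 2 : ℝ) * h = b) := ne_of_lt hxb
  have hcond : ∀ l' : ℤ, (clampedKnots a b m l' ≤ a + (1 / 2 : ℝ) * h
      ↔ max 0 (min l' ((m : ℤ) + 1)) ≤ 0) := by
    intro l'
    rw [knot_le_iff' hab]
    constructor
    · intro hle
      by_contra hc
      have h1 : (1 : ℤ) ≤ max 0 (min l' ((m : ℤ) + 1)) := by omega
      have h2 : (1 : ℝ) ≤ ((max 0 (min l' ((m : ℤ) + 1)) : ℤ) : ℝ) := by exact_mod_cast h1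
      linarith
    · intro hle
      have h2 : ((max 0 (min l' ((m : ℤ) + 1)) : ℤ) : ℝ) ≤ 0 := by exact_mod_cast hle
      linarith
  have hcond2 : ∀ l' : ℤ, (a + (1 / 2 : ℝ) * h < clampedKnots a b m l'
      ↔ 0 < max 0 (min l' ((m : ℤ) + 1))) := by
    intro l'
    constructor
    · intro hlt
      by_contra hc
      exact absurd ((hcond l').2 (by omega)) (not_le.2 hlt)
    · intro hlt
      by_contra hc
      push_neg at hc
      have := (hcond l').1 hc
      omega
  simp only [hne, false_and, and_false, or_false, hcond, hcond2]
  simp only [show (max 0 (min l ((m : ℤ) + 1)) ≤ 0 ∧ 0 < max 0 (min (l + 1) ((m : ℤ) + 1)))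
      ↔ l = 0 from by omega]

lemma Bspl_at_half (a b : ℝ) (hab : a < b) (m : ℕ) (hm : 1 ≤ m) (j : ℤ) :
    Bspl a b m j (a + (1 / 2 : ℝ) * ((b - a) / ((m : ℝ) + 1)))
      = if j = 0 then 1 / 4 else if j = 1 then 5 / 8 else if j = 2 then 1 / 8 else 0 := by
  have hp := hstep_pos hab m
  set h := (b - a) / ((m : ℝ) + 1) with hh
  have hne : h ≠ 0 := ne_of_gt hp
  have hN := cdB0_at_half a b hab m
  rw [Bspl, cdB2_expand, hN, hN, hN]
  have km1 : clampedKnots a b m (-1) = a := knot_nonpos _ _ _ _ (by omega)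
  have k0 : clampedKnots a b m 0 = a := knot_nonpos _ _ _ _ (by omega)
  have k1 : clampedKnots a b m 1 = a + 1 * h := by
    rw [knot_val a b m 1 (by omega) (by omega)]; norm_num; exact hh.symm
  have k2 : clampedKnots a b m 2 = a + 2 * h := by
    rw [knot_val a b m 2 (by omega) (by omega)]; norm_num; exact hh.symm
  by_cases h0 : j = 0
  · subst h0
    rw [if_neg (by omega), if_neg (by omega), if_pos (by omega), if_pos rfl]
    simp only [mul_zero, mul_one, add_zero, zero_add,
      show ((0 : ℤ) - 2 + 1 : ℤ) = -1 from by ring,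
      show ((0 : ℤ) - 2 + 2 : ℤ) = 0 from by ring,
      show ((0 : ℤ) - 2 + 3 : ℤ) = 1 from by ring,
      show ((-1 : ℤ) + 1 : ℤ) = 0 from by ring,
      show ((-1 : ℤ) + 2 : ℤ) = 1 from by ring,
      km1, k0, k1]
    field_simp
    ring
    field_simp
  · by_cases h1 : j = 1
    · subst h1
      rw [if_neg (by omega), if_pos (by omega), if_neg (by omega), if_neg (by omega),
        if_pos rfl]
      simp only [mul_zero, mul_one, add_zero, zero_add,
        show ((1 : ℤ) - 2 : ℤ) = -1 from by ring,
        show ((-1 : ℤ) + 1 : ℤ) = 0 from by ring,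
        show ((-1 : ℤ) + 2 : ℤ) = 1 from by ring,
        show ((-1 : ℤ) + 3 : ℤ) = 2 from by ring,
        km1, k0, k1, k2]
      field_simp
      ring
      field_simp
    · by_cases h2 : j = 2
      · subst h2
        rw [if_pos (by omega), if_neg (by omega), if_neg (by omega), if_neg (by omega),
          if_neg (by omega), if_pos rfl]
        simp only [mul_zero, mul_one, add_zero, zero_add,
          show ((2 : ℤ) - 2 : ℤ) = 0 from by ring,
          show ((0 : ℤ) + 1 : ℤ) = 1 from by ring,
          show ((0 : ℤ) + 2 : ℤ) = 2 from by ring,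
          k0, k1, k2]
        field_simp
        ring
        field_simp
      · rw [if_neg (by omega), if_neg (by omega), if_neg (by omega), if_neg h0, if_neg h1,
          if_neg h2]
        simp only [mul_zero, add_zero, zero_add]

section
variable {M : Type*} [AddCommGroup M] [Module ℝ M]

lemma collapse1 (N : ℕ) (z : ℤ) (i₀ : ℕ) (hz : z = (i₀ : ℤ)) (hi : i₀ < N) (f : ℕ → M) :
    ∑ i ∈ Finset.range N, (if (i : ℤ) = z then (1 : ℝ) else 0) • f i = f i₀ := by
  subst hz
  rw [Finset.sum_eq_single i₀]
  · rw [if_pos rfl, one_smul]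
  · intro i _ hne
    rw [if_neg (by exact_mod_cast hne), zero_smul]
  · intro hmem
    exact absurd (Finset.mem_range.2 hi) hmem

lemma collapse2 (N : ℕ) (z : ℤ) (r : ℕ) (hz : z = (r : ℤ)) (hr : r + 1 < N) (f : ℕ → M) :
    ∑ i ∈ Finset.range N, (if (i : ℤ) = z ∨ (i : ℤ) = z + 1 then (1 / 2 : ℝ) else 0) • f i
      = (1 / 2 : ℝ) • (f r + f (r + 1)) := by
  subst hz
  have step : ∀ i : ℕ,
      (if (i : ℤ) = (r : ℤ) ∨ (i : ℤ) = (r : ℤ) + 1 then (1 / 2 : ℝ) else 0) • f i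
        = (1 / 2 : ℝ) • ((if (i : ℤ) = (r : ℤ) then (1 : ℝ) else 0) • f i)
          + (1 / 2 : ℝ) • ((if (i : ℤ) = (r : ℤ) + 1 then (1 : ℝ) else 0) • f i) := by
    intro i
    by_cases h1 : (i : ℤ) = (r : ℤ)
    · rw [if_pos (Or.inl h1), if_pos h1, if_neg (by omega), zero_smul, smul_zero, add_zero,
        one_smul]
    · by_cases h2 : (i : ℤ) = (r : ℤ) + 1
      · rw [if_pos (Or.inr h2), if_pos h2, if_neg h1, zero_smul, smul_zero, zero_add, one_smul]
      · rw [if_neg (by tauto), if_neg h1, if_neg h2]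
        simp
  calc ∑ i ∈ Finset.range N,
        (if (i : ℤ) = (r : ℤ) ∨ (i : ℤ) = (r : ℤ) + 1 then (1 / 2 : ℝ) else 0) • f i
      = ∑ i ∈ Finset.range N,
          ((1 / 2 : ℝ) • ((if (i : ℤ) = (r : ℤ) then (1 : ℝ) else 0) • f i)
            + (1 / 2 : ℝ) • ((if (i : ℤ) = (r : ℤ) + 1 then (1 : ℝ) else 0) • f i)) :=
        Finset.sum_congr rfl fun i _ => step i
    _ = (1 / 2 : ℝ) • (f r + f (r + 1)) := by
        rw [Finset.sum_add_distrib, ← Finset.smul_sum, ← Finset.smul_sum,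
          collapse1 N (r : ℤ) r rfl (by omega), collapse1 N ((r : ℤ) + 1) (r + 1) (by push_cast; ring) hr,
          smul_add]

lemma collapse3 (N : ℕ) (hN : 3 ≤ N) (f : ℕ → M) :
    ∑ i ∈ Finset.range N,
        (if (i : ℤ) = 0 then (1 / 4 : ℝ) else if (i : ℤ) = 1 then (5 / 8 : ℝ)
          else if (i : ℤ) = 2 then (1 / 8 : ℝ) else 0) • f i
      = (1 / 4 : ℝ) • f 0 + (5 / 8 : ℝ) • f 1 + (1 / 8 : ℝ) • f 2 := by
  have step : ∀ i : ℕ,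
      (if (i : ℤ) = 0 then (1 / 4 : ℝ) else if (i : ℤ) = 1 then (5 / 8 : ℝ)
          else if (i : ℤ) = 2 then (1 / 8 : ℝ) else 0) • f i
        = (1 / 4 : ℝ) • ((if (i : ℤ) = 0 then (1 : ℝ) else 0) • f i)
          + (5 / 8 : ℝ) • ((if (i : ℤ) = 1 then (1 : ℝ) else 0) • f i)
          + (1 / 8 : ℝ) • ((if (i : ℤ) = 2 then (1 : ℝ) else 0) • f i) := by
    intro i
    by_cases h0 : (i : ℤ) = 0
    · rw [if_pos h0, if_pos h0, if_neg (by omega), if_neg (by omega)]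
      simp
    · rw [if_neg h0, if_neg h0]
      by_cases h1 : (i : ℤ) = 1
      · rw [if_pos h1, if_pos h1, if_neg (by omega)]
        simp
      · rw [if_neg h1, if_neg h1]
        by_cases h2 : (i : ℤ) = 2
        · rw [if_pos h2, if_pos h2]
          simp
        · rw [if_neg h2, if_neg h2]
          simp
  rw [Finset.sum_congr rfl fun i _ => step i]
  rw [Finset.sum_add_distrib, Finset.sum_add_distrib, ← Finset.smul_sum, ← Finset.smul_sum,
    ← Finset.smul_sum, collapse1 N 0 0 (by simp) (by omega),
    collapse1 N 1 1 (by simp) (by omega), collapse1 N 2 2 (by simp) (by omega)]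

lemma linIndep (c d : ℝ) (hcd : c < d) (n : ℕ) (hn : 1 ≤ n) (Q : ℕ → M)
    (H : ∀ v ∈ Set.Icc c d, ∑ j ∈ Finset.range (n + 3), Bspl c d n (j : ℤ) v • Q j = 0) :
    ∀ j, j < n + 3 → Q j = 0 := by
  have hp := hstep_pos hcd n
  have hd : c + ((n : ℝ) + 1) * ((d - c) / ((n : ℝ) + 1)) = d := b_eq n hcd
  have E0 : Q 0 = 0 := by
    have h1 := H c ⟨le_rfl, le_of_lt hcd⟩
    simp only [Bspl_at_left c d hcd n] at h1
    rwa [collapse1 (n + 3) 0 0 (by simp) (by omega)] at h1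
  have En2 : Q (n + 2) = 0 := by
    have h1 := H d ⟨le_of_lt hcd, le_rfl⟩
    simp only [Bspl_at_right c d hcd n] at h1
    rwa [collapse1 (n + 3) ((n : ℤ) + 2) (n + 2) (by push_cast; ring) (by omega)] at h1
  have Eknot : ∀ s : ℕ, 1 ≤ s → s ≤ n → Q s + Q (s + 1) = 0 := by
    intro s hs1 hs2
    have hmem : clampedKnots c d n (s : ℤ) ∈ Set.Icc c d := by
      rw [knot_val c d n s (by omega) (by omega)]
      have h0s : (0 : ℝ) ≤ ((s : ℤ) : ℝ) := by
        exact_mod_cast (by omega : (0 : ℤ) ≤ (s : ℤ))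
      have hsn : ((s : ℤ) : ℝ) ≤ (n : ℝ) + 1 := by
        have h' : (s : ℤ) ≤ (n : ℤ) + 1 := by omega
        exact_mod_cast h'
      constructor
      · nlinarith
      · nlinarith
    have h1 := H _ hmem
    simp only [Bspl_at_interior c d hcd n s hs1 hs2] at h1
    rw [collapse2 (n + 3) (s : ℤ) s rfl (by omega)] at h1
    have h2 : Q s + Q (s + 1) = (2 : ℝ) • ((1 / 2 : ℝ) • (Q s + Q (s + 1))) := by module
    rw [h2, h1, smul_zero]
  have Emid : (1 / 4 : ℝ) • Q 0 + (5 / 8 : ℝ) • Q 1 + (1 / 8 : ℝ) • Q 2 = 0 := by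
    have hmem : c + (1 / 2 : ℝ) * ((d - c) / ((n : ℝ) + 1)) ∈ Set.Icc c d := by
      have h0n : (0 : ℝ) ≤ (n : ℝ) := Nat.cast_nonneg n
      constructor
      · nlinarith
      · nlinarith
    have h1 := H _ hmem
    simp only [Bspl_at_half c d hcd n hn] at h1
    rwa [collapse3 (n + 3) (by omega)] at h1
  have E1 : Q 1 = 0 := by
    have hk1 : Q 1 + Q 2 = 0 := by
      have := Eknot 1 le_rfl hn
      norm_num at this
      exact this
    have hr : Q 1 = (2 : ℝ) • ((1 / 4 : ℝ) • Q 0 + (5 / 8 : ℝ) • Q 1 + (1 / 8 : ℝ) • Q 2)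
        - (1 / 4 : ℝ) • (Q 1 + Q 2) - (1 / 2 : ℝ) • Q 0 := by module
    rw [hr, Emid, hk1, E0, smul_zero, smul_zero, smul_zero, sub_zero, sub_zero]
  have key : ∀ s : ℕ, 1 ≤ s → s ≤ n + 1 → Q s = 0 := by
    intro s
    induction s with
    | zero => omega
    | succ t ih =>
      intro h1 h2
      by_cases ht : t = 0
      · subst ht; exact E1
      · have hQt : Q t = 0 := ih (by omega) (by omega)
        have hkt := Eknot t (by omega) (by omega)
        have hr : Q (t + 1) = (Q t + Q (t + 1)) - Q t := by abel
        rw [hr, hkt, hQt, sub_zero]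
  intro j hj
  by_cases j0 : j = 0
  · subst j0; exact E0
  · by_cases jn : j = n + 2
    · subst jn; exact En2
    · exact key j (by omega) (by omega)

end

/-- Tensor-product version of (one half of) Theorem 1: the curves
`φ r (v) = ∑ⱼ B j v • P r j` are the isoparametric curves `S (u r, ·)` of the
tensor-product quadratic spline surface `S` if and only if the coefficients `C`
satisfy the boundary conditions `C 0 j = P 0 j`, `C (m+2) j = P (m+1) j` and the
averaging conditions `C r j + C (r+1) j = 2 P r j` at interior knots. -/
theorem stmt13 (a b c d : ℝ) (hab : a < b) (hcd : c < d) (m n : ℕ)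
    (hm : 1 ≤ m) (hn : 1 ≤ n) (C P : ℕ → ℕ → Fin 3 → ℝ) :
    (∀ r : ℕ, r ≤ m + 1 → ∀ v ∈ Set.Icc c d,
      (∑ i ∈ Finset.range (m + 3), ∑ j ∈ Finset.range (n + 3),
          (Bspl a b m i (clampedKnots a b m r) * Bspl c d n j v) • C i j) =
        ∑ j ∈ Finset.range (n + 3), Bspl c d n j v • P r j) ↔
    ((∀ j, j ≤ n + 2 → C 0 j = P 0 j) ∧
      (∀ j, j ≤ n + 2 → C (m + 2) j = P (m + 1) j) ∧
      (∀ r j, 1 ≤ r → r ≤ m → j ≤ n + 2 →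
        C r j + C (r + 1) j = (2 : ℝ) • P r j)) := by
  have expand : ∀ (x v : ℝ) (G : ℕ → ℕ → Fin 3 → ℝ),
      (∑ i ∈ Finset.range (m + 3), ∑ j ∈ Finset.range (n + 3),
          (Bspl a b m i x * Bspl c d n j v) • G i j)
        = ∑ i ∈ Finset.range (m + 3), Bspl a b m i x •
            ∑ j ∈ Finset.range (n + 3), Bspl c d n j v • G i j := by
    intro x v G
    refine Finset.sum_congr rfl fun i _ => ?_
    rw [Finset.smul_sum]
    exact Finset.sum_congr rfl fun j _ => mul_smul _ _ _
  have hpt0 : clampedKnots a b m ((0 : ℕ) : ℤ) = a := knot_nonpos a b m _ (by simp)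
  have hptb : clampedKnots a b m (((m + 1 : ℕ)) : ℤ) = b := by
    rw [knot_eq_b_iff hab]
    push_cast
    omega
  -- reductions of the left-hand side
  have red0 : ∀ v : ℝ,
      (∑ i ∈ Finset.range (m + 3), ∑ j ∈ Finset.range (n + 3),
          (Bspl a b m i (clampedKnots a b m ((0 : ℕ) : ℤ)) * Bspl c d n j v) • C i j)
        = ∑ j ∈ Finset.range (n + 3), Bspl c d n j v • C 0 j := by
    intro v
    rw [expand, hpt0]
    simp only [Bspl_at_left a b hab m]
    exact collapse1 (m + 3) 0 0 (by simp) (by omega) _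
  have redb : ∀ v : ℝ,
      (∑ i ∈ Finset.range (m + 3), ∑ j ∈ Finset.range (n + 3),
          (Bspl a b m i (clampedKnots a b m (((m + 1 : ℕ)) : ℤ)) * Bspl c d n j v) • C i j)
        = ∑ j ∈ Finset.range (n + 3), Bspl c d n j v • C (m + 2) j := by
    intro v
    rw [expand, hptb]
    simp only [Bspl_at_right a b hab m]
    exact collapse1 (m + 3) ((m : ℤ) + 2) (m + 2) (by push_cast; ring) (by omega) _
  have redr : ∀ (r : ℕ), 1 ≤ r → r ≤ m → ∀ v : ℝ,
      (∑ i ∈ Finset.range (m + 3), ∑ j ∈ Finset.range (n + 3),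
          (Bspl a b m i (clampedKnots a b m ((r : ℕ) : ℤ)) * Bspl c d n j v) • C i j)
        = (1 / 2 : ℝ) • ((∑ j ∈ Finset.range (n + 3), Bspl c d n j v • C r j)
            + ∑ j ∈ Finset.range (n + 3), Bspl c d n j v • C (r + 1) j) := by
    intro r hr1 hr2 v
    rw [expand]
    simp only [Bspl_at_interior a b hab m r hr1 hr2]
    exact collapse2 (m + 3) (r : ℤ) r rfl (by omega) _
  constructor
  · intro H
    refine ⟨?_, ?_, ?_⟩
    · -- C 0 j = P 0 j
      intro j hj
      have H0 := H 0 (by omega)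
      have H' : ∀ v ∈ Set.Icc c d,
          ∑ j ∈ Finset.range (n + 3), Bspl c d n (j : ℤ) v • (C 0 j - P 0 j) = 0 := by
        intro v hv
        have h1 := H0 v hv
        rw [red0 v] at h1
        calc ∑ j ∈ Finset.range (n + 3), Bspl c d n (j : ℤ) v • (C 0 j - P 0 j)
            = (∑ j ∈ Finset.range (n + 3), Bspl c d n (j : ℤ) v • C 0 j)
              - ∑ j ∈ Finset.range (n + 3), Bspl c d n (j : ℤ) v • P 0 j := by
              rw [← Finset.sum_sub_distrib]
              exact Finset.sum_congr rfl fun j _ => smul_sub _ _ _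
          _ = 0 := by rw [h1, sub_self]
      have := linIndep c d hcd n hn _ H' j (by omega)
      exact sub_eq_zero.1 this
    · -- C (m+2) j = P (m+1) j
      intro j hj
      have H0 := H (m + 1) (by omega)
      have H' : ∀ v ∈ Set.Icc c d,
          ∑ j ∈ Finset.range (n + 3), Bspl c d n (j : ℤ) v • (C (m + 2) j - P (m + 1) j)
            = 0 := by
        intro v hv
        have h1 := H0 v hv
        rw [redb v] at h1
        calc ∑ j ∈ Finset.range (n + 3), Bspl c d n (j : ℤ) v • (C (m + 2) j - P (m + 1) j)
            = (∑ j ∈ Finset.range (n + 3), Bspl c d n (j : ℤ) v • C (m + 2) j)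
              - ∑ j ∈ Finset.range (n + 3), Bspl c d n (j : ℤ) v • P (m + 1) j := by
              rw [← Finset.sum_sub_distrib]
              exact Finset.sum_congr rfl fun j _ => smul_sub _ _ _
          _ = 0 := by rw [h1, sub_self]
      have := linIndep c d hcd n hn _ H' j (by omega)
      exact sub_eq_zero.1 this
    · -- averaging conditions
      intro r j hr1 hr2 hj
      have H0 := H r (by omega)
      have H' : ∀ v ∈ Set.Icc c d,
          ∑ j ∈ Finset.range (n + 3), Bspl c d n (j : ℤ) v •
            ((1 / 2 : ℝ) • C r j + (1 / 2 : ℝ) • C (r + 1) j - P r j) = 0 := by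
        intro v hv
        have h1 := H0 v hv
        rw [redr r hr1 hr2 v] at h1
        calc ∑ j ∈ Finset.range (n + 3), Bspl c d n (j : ℤ) v •
              ((1 / 2 : ℝ) • C r j + (1 / 2 : ℝ) • C (r + 1) j - P r j)
            = ((1 / 2 : ℝ) • ((∑ j ∈ Finset.range (n + 3), Bspl c d n (j : ℤ) v • C r j)
                + ∑ j ∈ Finset.range (n + 3), Bspl c d n (j : ℤ) v • C (r + 1) j))
              - ∑ j ∈ Finset.range (n + 3), Bspl c d n (j : ℤ) v • P r j := by
              rw [smul_add, Finset.smul_sum, Finset.smul_sum, ← Finset.sum_add_distrib,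
                ← Finset.sum_sub_distrib]
              refine Finset.sum_congr rfl fun j _ => ?_
              rw [smul_sub, smul_add]
              congr 1
              congr 1 <;> exact smul_comm _ _ _
          _ = 0 := by rw [h1, sub_self]
      have h0 := linIndep c d hcd n hn _ H' j (by omega)
      have : C r j + C (r + 1) j
          = (2 : ℝ) • ((1 / 2 : ℝ) • C r j + (1 / 2 : ℝ) • C (r + 1) j - P r j)
            + (2 : ℝ) • P r j := by module
      rw [this, h0, smul_zero, zero_add]
  · rintro ⟨h1, h2, h3⟩ r hr v hv
    by_cases hr0 : r = 0
    · subst hr0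
      rw [red0 v]
      exact Finset.sum_congr rfl fun j hj =>
        congrArg _ (h1 j (by have := Finset.mem_range.1 hj; omega))
    · by_cases hrb : r = m + 1
      · subst hrb
        rw [redb v]
        exact Finset.sum_congr rfl fun j hj =>
          congrArg _ (h2 j (by have := Finset.mem_range.1 hj; omega))
      · have hr1 : 1 ≤ r := by omega
        have hr2 : r ≤ m := by omega
        rw [redr r hr1 hr2 v]
        calc (1 / 2 : ℝ) • ((∑ j ∈ Finset.range (n + 3), Bspl c d n (j : ℤ) v • C r j)
              + ∑ j ∈ Finset.range (n + 3), Bspl c d n (j : ℤ) v • C (r + 1) j)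
            = ∑ j ∈ Finset.range (n + 3),
                ((1 / 2 : ℝ) • (Bspl c d n (j : ℤ) v • C r j)
                  + (1 / 2 : ℝ) • (Bspl c d n (j : ℤ) v • C (r + 1) j)) := by
              rw [smul_add, Finset.smul_sum, Finset.smul_sum, ← Finset.sum_add_distrib]
          _ = ∑ j ∈ Finset.range (n + 3), Bspl c d n (j : ℤ) v • P r j := by
              refine Finset.sum_congr rfl fun j hj => ?_
              have hc := h3 r j hr1 hr2 (by have := Finset.mem_range.1 hj; omega)
              have hp : P r j = (1 / 2 : ℝ) • (C r j + C (r + 1) j) := by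
                rw [hc]; module
              rw [hp]
              module
end
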